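/- Let (Λ, δ) be a population protocol with output state y and let (o_n)_{n∈ℕ} be an infinite nondecreasing sequence of stable configurations with Γ = unbdd((o_n)). Then for every n, every u ∈ ℕ^Γ and every w ∈ ℕ^Λ with w ≤ o_n + u componentwise, the configuration o_n + u − w is stable. -/

import Mathlib

/-! Basic definitions for (leaderless) population protocols:
configurations, transitions, paths, reachability, bottlenecks, stability. -/

namespace PP

variable {Λ : Type*}

open Classical in
/-- The configuration consisting of a single agent in state `s`. -/
noncomputable def single (s : Λ) : Λ → ℕ := fun t => if t = s then 1 else 0

/-- The configuration consisting of the two agents of the ordered pair `r`. -/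
noncomputable def pairConf (r : Λ × Λ) : Λ → ℕ := single r.1 + single r.2

/-- The transition with input pair `r` is applicable to configuration `c`. -/
def Applicable (c : Λ → ℕ) (r : Λ × Λ) : Prop := pairConf r ≤ c

/-- The result of applying the transition with inputs `r` (and outputs `δ r`) to `c`. -/
noncomputable def applyTx (δ : Λ × Λ → Λ × Λ) (r : Λ × Λ) (c : Λ → ℕ) : Λ → ℕ :=
  c - pairConf r + pairConf (δ r)

/-- `PathFrom δ c p c'`: executing the transition sequence `p` (each transition given
by its ordered pair of input states) from `c` is valid and ends in `c'`. -/
inductive PathFrom (δ : Λ × Λ → Λ × Λ) : (Λ → ℕ) → List (Λ × Λ) → (Λ → ℕ) → Prop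
  | nil (c : Λ → ℕ) : PathFrom δ c [] c
  | cons {c c' : Λ → ℕ} (r : Λ × Λ) {p : List (Λ × Λ)} :
      Applicable c r → PathFrom δ (applyTx δ r c) p c' → PathFrom δ c (r :: p) c'

/-- `Reach δ c c'` means `c ⟹ c'`: some finite path leads from `c` to `c'`. -/
def Reach (δ : Λ × Λ → Λ × Λ) (c c' : Λ → ℕ) : Prop := ∃ p, PathFrom δ c p c'

/-- `NoBottleneck δ b c p`: no transition of path `p` executed from `c` is a
`b`-bottleneck for the configuration to which it is applied. -/
inductive NoBottleneck (δ : Λ × Λ → Λ × Λ) (b : ℕ) : (Λ → ℕ) → List (Λ × Λ) → Prop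
  | nil (c : Λ → ℕ) : NoBottleneck δ b c []
  | cons {c : Λ → ℕ} (r : Λ × Λ) {p : List (Λ × Λ)} :
      ¬(c r.1 ≤ b ∧ c r.2 ≤ b) → NoBottleneck δ b (applyTx δ r c) p →
      NoBottleneck δ b c (r :: p)

/-- A configuration is stable w.r.t. output state `y` if the count of `y` can never
change again. -/
def Stable (δ : Λ × Λ → Λ × Λ) (y : Λ) (o : Λ → ℕ) : Prop :=
  ∀ o', Reach δ o o' → o' y = o y

/-- The transition function is symmetric. -/
def Symmetric (δ : Λ × Λ → Λ × Λ) : Prop :=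
  ∀ r1 r2 : Λ, δ (r2, r1) = ((δ (r1, r2)).2, (δ (r1, r2)).1)

end PP

/-! Stability is downward closed: an execution from `d ≤ c` lifts to one from `c` in which the
extra agents `c - d` stay idle, so a change of output from `d` would be one from `c`. Since `o` is
nondecreasing and `Λ` is finite, `o n + u` lies below a single `o m` when `u` lives on the
unbounded states, hence `o n + u - w ≤ o m` is stable. -/

namespace PP

variable {Λ : Type*} {δ : Λ × Λ → Λ × Λ}

theorem applyTx_add_right {c : Λ → ℕ} {r : Λ × Λ} (hr : Applicable c r) (w : Λ → ℕ) :
    applyTx δ r (c + w) = applyTx δ r c + w := by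
  funext s
  have := hr s
  simp only [applyTx, Pi.add_apply, Pi.sub_apply] at *
  omega

theorem PathFrom.add_right {c d : Λ → ℕ} {p : List (Λ × Λ)} (h : PathFrom δ c p d)
    (w : Λ → ℕ) : PathFrom δ (c + w) p (d + w) := by
  induction h with
  | nil c => exact .nil _
  | cons r hr _ ih =>
    refine .cons r (le_add_right hr) ?_
    rwa [applyTx_add_right hr]

theorem Reach.add_right {c d : Λ → ℕ} (h : Reach δ c d) (w : Λ → ℕ) :
    Reach δ (c + w) (d + w) :=
  let ⟨p, hp⟩ := h
  ⟨p, hp.add_right w⟩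

theorem Stable.of_le {y : Λ} {c d : Λ → ℕ} (hc : Stable δ y c) (hdc : d ≤ c) :
    Stable δ y d := by
  intro d' hd'
  have hreach : Reach δ c (d' + (c - d)) := by
    simpa only [add_tsub_cancel_of_le hdc] using hd'.add_right (c - d)
  have hy := hc _ hreach
  have hdy : d y ≤ c y := hdc y
  simp only [Pi.add_apply, Pi.sub_apply] at hy
  omega

end PP

theorem Monotone.exists_le_apply_of_forall_exists {ι Λ : Type*} [Preorder ι] [Nonempty ι]
    [IsDirectedOrder ι] [Finite Λ] {o : ι → Λ → ℕ} (hmono : Monotone o) {v : Λ → ℕ}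
    (hv : ∀ s, ∃ k, v s ≤ o k s) : ∃ m, v ≤ o m := by
  have hev : ∀ s, ∀ᶠ k in Filter.atTop, v s ≤ o k s := fun s =>
    let ⟨k, hk⟩ := hv s
    Filter.eventually_atTop.2 ⟨k, fun _ hj => hk.trans (hmono hj s)⟩
  exact (Filter.eventually_all.2 hev).exists

/-- If `(o_n)` is an infinite nondecreasing sequence of stable configurations and
`Γ = unbdd((o_n))`, then for every `n`, every `u ∈ ℕ^Γ` and every `w ≤ o_n + u`,
the configuration `o_n + u − w` is stable. -/
theorem stmt6 {Λ : Type*} [Fintype Λ] (δ : Λ × Λ → Λ × Λ) (y : Λ)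
    (o : ℕ → Λ → ℕ) (hmono : Monotone o) (hst : ∀ n, PP.Stable δ y (o n))
    (Γ : Set Λ) (hΓ : ∀ s : Λ, s ∈ Γ ↔ ¬ ∃ B : ℕ, ∀ n, o n s < B) :
    ∀ (n : ℕ) (u w : Λ → ℕ), (∀ s ∉ Γ, u s = 0) → w ≤ o n + u →
      PP.Stable δ y (o n + u - w) := by
  intro n u w hu _
  have hreached : ∀ s, ∃ k, o n s + u s ≤ o k s := by
    intro s
    by_cases hs : s ∈ Γ
    · have hunbdd := (hΓ s).1 hs
      simp only [not_exists, not_forall, not_lt] at hunbdd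
      exact hunbdd (o n s + u s)
    · exact ⟨n, by rw [hu s hs, add_zero]⟩
  obtain ⟨m, hm⟩ := hmono.exists_le_apply_of_forall_exists hreached
  exact (hst m).of_le (tsub_le_self.trans hm)
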